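/- The BDNN training problem and its linearized mixed-integer programming reformulation have the same optimal value: the infimum of ∑_{i=1}^m ℓ(y^i, f_{W,λ}(x^i)) over all W^k ∈ ℝ^{d_k×d_{k−1}}, λ_k ∈ ℝ equals the infimum of ∑_{i=1}^m ℓ(y^i, u^{i,K}) over all W^k ∈ [−1,1]^{d_k×d_{k−1}}, λ_k ∈ [−1,1], u^{i,k} ∈ {0,1}^{d_k}, and auxiliary variables s^{i,k}_{lj} ∈ [−1,1] (i ∈ [m], k ∈ {2,…,K}, l ∈ [d_{k−1}], j ∈ [d_k]) satisfying: W^1 x^i < M_1 u^{i,1} + λ_1; W^1 x^i ≥ M_1(u^{i,1} − 1) + λ_1; for every k ∈ {2,…,K} and j ∈ [d_k]: ∑_{l=1}^{d_{k−1}} s^{i,k}_{lj} < M_k u^{i,k}_j + λ_k and ∑_{l=1}^{d_{k−1}} s^{i,k}_{lj} ≥ M_k(u^{i,k}_j − 1) + λ_k, together with the linearization constraints s^{i,k}_{lj} ≤ u^{i,k−1}_l, s^{i,k}_{lj} ≥ −u^{i,k−1}_l, s^{i,k}_{lj} ≤ w^k_{jl} + (1 − u^{i,k−1}_l), and s^{i,k}_{lj}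 ≥ w^k_{jl} − (1 − u^{i,k−1}_l), where M_1 = nr + 1 and M_k = d_{k−1} + 1. -/
import Mathlib


/-- Binary activation function: `σ_λ(α) = 1` if `α ≥ λ`, `0` if `α < λ`. -/
noncomputable def binAct (lam a : ℝ) : ℝ := if a < lam then 0 else 1

/-- Output of the first `k` layers of a BDNN with widths `d 0, d 1, …`,
weight matrices `W k : ℝ^{d (k+1) × d k}` (the matrix of layer `k+1`, 1-indexed) and
thresholds `lam k` (the threshold of layer `k+1`, 1-indexed). -/
noncomputable def bdnnOut (d : ℕ → ℕ) (W : (k : ℕ) → Matrix (Fin (d (k+1))) (Fin (d k)) ℝ)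
    (lam : ℕ → ℝ) : (k : ℕ) → (Fin (d 0) → ℝ) → Fin (d k) → ℝ
  | 0, x => x
  | k+1, x => fun j => binAct (lam k) ((W k).mulVec (bdnnOut d W lam k x) j)

lemma binAct_mem (lam a : ℝ) : binAct lam a = 0 ∨ binAct lam a = 1 := by
  unfold binAct; split <;> simp

lemma binAct_scale {c : ℝ} (hc : 0 < c) (lam a : ℝ) :
    binAct (c * lam) (c * a) = binAct lam a := by
  unfold binAct
  rw [if_congr (mul_lt_mul_iff_right₀ hc) rfl rfl]

lemma mulVec_apply' {p q : ℕ} (A : Matrix (Fin p) (Fin q) ℝ) (v : Fin q → ℝ) (j : Fin p) :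
    A.mulVec v j = ∑ l, A j l * v l := by
  simp [Matrix.mulVec, dotProduct]

lemma bdnnOut_scale (d : ℕ → ℕ) (W : (k : ℕ) → Matrix (Fin (d (k+1))) (Fin (d k)) ℝ)
    (lam : ℕ → ℝ) (t : ℕ → ℝ) (ht : ∀ k, 0 < t k) (n : ℕ) (x : Fin (d 0) → ℝ) :
    bdnnOut d (fun k => t k • W k) (fun k => t k * lam k) n x = bdnnOut d W lam n x := by
  induction n with
  | zero => rfl
  | succ n ih =>
    funext j
    show binAct (t n * lam n)
        ((t n • W n).mulVec (bdnnOut d (fun k => t k • W k) (fun k => t k * lam k) n x) j) = _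
    rw [ih, Matrix.smul_mulVec]
    show binAct (t n * lam n) (t n * (W n).mulVec (bdnnOut d W lam n x) j) = _
    rw [binAct_scale (ht n)]
    rfl

lemma binAct_key {M L a : ℝ} (h : |a| + |L| < M) :
    a < M * binAct L a + L ∧ M * (binAct L a - 1) + L ≤ a := by
  have h1 := le_abs_self a
  have h2 := neg_abs_le a
  have h3 := le_abs_self L
  have h4 := neg_abs_le L
  unfold binAct
  split_ifs with hc
  · constructor <;> linarith
  · push_neg at hc
    constructor <;> linarith

/-- The BDNN training problem and its linearized MIP reformulation have the same optimal
value. Layers are 1-indexed `1, …, K`; the matrix of layer `k` is `W (k-1)` and its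
threshold `lam (k-1)`; `u i k` plays the role of `u^{i,k}` (with `u i 0` irrelevant), and
`s i k l j` plays the role of the linearization variable `s^{i,k+2}_{lj}` for the
(1-indexed) layer `k+2 ∈ {2,…,K}`. -/
theorem bdnn_mip_equiv
    (K : ℕ) (hK : 1 ≤ K) (m : ℕ) (d : ℕ → ℕ) (r : ℝ) (hr : 0 < r)
    (x : Fin m → Fin (d 0) → ℝ)
    (hx : ∀ i, Real.sqrt (∑ l, x i l ^ 2) ≤ r)
    (y : Fin m → ℝ) (hy : ∀ i, y i = 0 ∨ y i = 1)
    (loss : ℝ → (Fin (d K) → ℝ) → ℝ) :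
    sInf { v : ℝ | ∃ (W : (k : ℕ) → Matrix (Fin (d (k+1))) (Fin (d k)) ℝ) (lam : ℕ → ℝ),
        v = ∑ i, loss (y i) (bdnnOut d W lam K (x i)) } =
    sInf { v : ℝ |
      ∃ (W : (k : ℕ) → Matrix (Fin (d (k+1))) (Fin (d k)) ℝ) (lam : ℕ → ℝ)
        (u : Fin m → (k : ℕ) → Fin (d k) → ℝ)
        (s : Fin m → (k : ℕ) → Fin (d (k+1)) → Fin (d (k+2)) → ℝ),
        (∀ k, k + 1 ≤ K → ∀ j l, W k j l ∈ Set.Icc (-1 : ℝ) 1) ∧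
        (∀ k, k + 1 ≤ K → lam k ∈ Set.Icc (-1 : ℝ) 1) ∧
        (∀ i k, 1 ≤ k → k ≤ K → ∀ j, u i k j = 0 ∨ u i k j = 1) ∧
        (∀ i k, k + 2 ≤ K → ∀ l j, s i k l j ∈ Set.Icc (-1 : ℝ) 1) ∧
        (∀ i j, (W 0).mulVec (x i) j < ((d 0 : ℝ) * r + 1) * u i 1 j + lam 0) ∧
        (∀ i j, (W 0).mulVec (x i) j ≥ ((d 0 : ℝ) * r + 1) * (u i 1 j - 1) + lam 0) ∧
        (∀ i k, k + 2 ≤ K → ∀ j,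
          (∑ l, s i k l j) < ((d (k+1) : ℝ) + 1) * u i (k+2) j + lam (k+1)) ∧
        (∀ i k, k + 2 ≤ K → ∀ j,
          (∑ l, s i k l j) ≥ ((d (k+1) : ℝ) + 1) * (u i (k+2) j - 1) + lam (k+1)) ∧
        (∀ i k, k + 2 ≤ K → ∀ l j, s i k l j ≤ u i (k+1) l) ∧
        (∀ i k, k + 2 ≤ K → ∀ l j, s i k l j ≥ -(u i (k+1) l)) ∧
        (∀ i k, k + 2 ≤ K → ∀ l j, s i k l j ≤ W (k+1) j l + (1 - u i (k+1) l)) ∧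
        (∀ i k, k + 2 ≤ K → ∀ l j, s i k l j ≥ W (k+1) j l - (1 - u i (k+1) l)) ∧
        v = ∑ i, loss (y i) (u i K) } := by
  have hxl : ∀ i l, |x i l| ≤ r := by
    intro i l
    have h1 : x i l ^ 2 ≤ ∑ l', x i l' ^ 2 :=
      Finset.single_le_sum (f := fun l' => x i l' ^ 2) (fun _ _ => sq_nonneg _)
        (Finset.mem_univ l)
    calc |x i l| = Real.sqrt (x i l ^ 2) := (Real.sqrt_sq_eq_abs _).symm
      _ ≤ Real.sqrt (∑ l', x i l' ^ 2) := Real.sqrt_le_sqrt h1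
      _ ≤ r := hx i
  congr 1
  ext v
  simp only [Set.mem_setOf_eq]
  constructor
  · -- NN value is an MIP value
    rintro ⟨W, lam, rfl⟩
    set B : ℕ → ℝ := fun k => |lam k| + ∑ j, ∑ l, |W k j l| with hBdef
    have hB0 : ∀ k, 0 ≤ B k := fun k =>
      add_nonneg (abs_nonneg _)
        (Finset.sum_nonneg fun _ _ => Finset.sum_nonneg fun _ _ => abs_nonneg _)
    set t : ℕ → ℝ := fun k => (B k + 1)⁻¹ with htdef
    have ht0 : ∀ k, 0 < t k := fun k => inv_pos.2 (by linarith [hB0 k])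
    have hlB : ∀ k, |lam k| ≤ B k := fun k =>
      le_add_of_nonneg_right
        (Finset.sum_nonneg fun _ _ => Finset.sum_nonneg fun _ _ => abs_nonneg _)
    have hWB : ∀ k j l, |W k j l| ≤ B k := by
      intro k j l
      have h1 : |W k j l| ≤ ∑ l', |W k j l'| :=
        Finset.single_le_sum (f := fun l' => |W k j l'|) (fun _ _ => abs_nonneg _)
          (Finset.mem_univ l)
      have h2 : (∑ l', |W k j l'|) ≤ ∑ j', ∑ l', |W k j' l'| :=
        Finset.single_le_sum (f := fun j' => ∑ l', |W k j' l'|)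
          (fun _ _ => Finset.sum_nonneg fun _ _ => abs_nonneg _) (Finset.mem_univ j)
      have h3 := abs_nonneg (lam k)
      simp only [hBdef]
      linarith
    have htB1 : ∀ k, t k * (B k + 1) = 1 := fun k => inv_mul_cancel₀ (by linarith [hB0 k])
    have he1 : ∀ k, t k * B k < 1 := fun k => by nlinarith [htB1 k, ht0 k]
    have he0 : ∀ k, 0 ≤ t k * B k := fun k => mul_nonneg (ht0 k).le (hB0 k)
    set W' : (k : ℕ) → Matrix (Fin (d (k+1))) (Fin (d k)) ℝ := fun k => t k • W k with hW'def
    set lam' : ℕ → ℝ := fun k => t k * lam k with hl'def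
    have hW'B : ∀ k j l, |W' k j l| ≤ t k * B k := by
      intro k j l
      rw [hW'def]
      show |t k * W k j l| ≤ _
      rw [abs_mul, abs_of_pos (ht0 k)]
      exact mul_le_mul_of_nonneg_left (hWB k j l) (ht0 k).le
    have hl'B : ∀ k, |lam' k| ≤ t k * B k := by
      intro k
      rw [hl'def]
      show |t k * lam k| ≤ _
      rw [abs_mul, abs_of_pos (ht0 k)]
      exact mul_le_mul_of_nonneg_left (hlB k) (ht0 k).le
    set u : Fin m → (k : ℕ) → Fin (d k) → ℝ :=
      fun i k => bdnnOut d W' lam' k (x i) with hudef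
    set s : Fin m → (k : ℕ) → Fin (d (k+1)) → Fin (d (k+2)) → ℝ :=
      fun i k l j => W' (k+1) j l * u i (k+1) l with hsdef
    have hu01 : ∀ i k j, u i (k+1) j = 0 ∨ u i (k+1) j = 1 := by
      intro i k j
      rw [hudef]
      exact binAct_mem _ _
    have huabs : ∀ i k j, |u i (k+1) j| ≤ 1 := by
      intro i k j
      rcases hu01 i k j with h | h <;> rw [h] <;> norm_num
    have hseq : ∀ i k l j, s i k l j = W' (k+1) j l * u i (k+1) l := by
      intro i k l j; rw [hsdef]
    have hu1eq : ∀ i j, u i 1 j = binAct (lam' 0) ((W' 0).mulVec (x i) j) := by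
      intro i j; rw [hudef]; rfl
    have hu2eq : ∀ i k j,
        u i (k+2) j = binAct (lam' (k+1)) ((W' (k+1)).mulVec (u i (k+1)) j) := by
      intro i k j; rw [hudef]; rfl
    have hkey1 : ∀ i j, (W' 0).mulVec (x i) j < ((d 0 : ℝ) * r + 1) * u i 1 j + lam' 0 ∧
        ((d 0 : ℝ) * r + 1) * (u i 1 j - 1) + lam' 0 ≤ (W' 0).mulVec (x i) j := by
      intro i j
      have hb : |(W' 0).mulVec (x i) j| + |lam' 0| < (d 0 : ℝ) * r + 1 := by
        have h1 : |(W' 0).mulVec (x i) j| ≤ (d 0 : ℝ) * (t 0 * B 0 * r) := by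
          rw [mulVec_apply']
          calc |∑ l, W' 0 j l * x i l| ≤ ∑ l, |W' 0 j l * x i l| :=
                Finset.abs_sum_le_sum_abs _ _
            _ ≤ ∑ _l : Fin (d 0), t 0 * B 0 * r :=
                Finset.sum_le_sum fun l _ => by
                  rw [abs_mul]
                  exact mul_le_mul (hW'B 0 j l) (hxl i l) (abs_nonneg _) (he0 0)
            _ = (d 0 : ℝ) * (t 0 * B 0 * r) := by
                simp [Finset.sum_const, mul_comm]
        have h2 := hl'B 0
        have h3 := he1 0
        have h4 := he0 0
        have h5 : (0 : ℝ) ≤ (d 0 : ℝ) := Nat.cast_nonneg _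
        nlinarith [mul_nonneg (mul_nonneg h5 hr.le) (by linarith : (0:ℝ) ≤ 1 - t 0 * B 0)]
      rw [hu1eq]
      exact binAct_key hb
    have hsumeq : ∀ i k j, (∑ l, s i k l j) = (W' (k+1)).mulVec (u i (k+1)) j := by
      intro i k j
      rw [mulVec_apply']
    have hkey2 : ∀ i k j,
        (∑ l, s i k l j) < ((d (k+1) : ℝ) + 1) * u i (k+2) j + lam' (k+1) ∧
        ((d (k+1) : ℝ) + 1) * (u i (k+2) j - 1) + lam' (k+1) ≤ ∑ l, s i k l j := by
      intro i k j
      rw [hsumeq]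
      have hb : |(W' (k+1)).mulVec (u i (k+1)) j| + |lam' (k+1)| < (d (k+1) : ℝ) + 1 := by
        have h1 : |(W' (k+1)).mulVec (u i (k+1)) j| ≤ (d (k+1) : ℝ) * (t (k+1) * B (k+1)) := by
          rw [mulVec_apply']
          calc |∑ l, W' (k+1) j l * u i (k+1) l| ≤ ∑ l, |W' (k+1) j l * u i (k+1) l| :=
                Finset.abs_sum_le_sum_abs _ _
            _ ≤ ∑ _l : Fin (d (k+1)), t (k+1) * B (k+1) :=
                Finset.sum_le_sum fun l _ => by
                  rw [abs_mul]
                  calc |W' (k+1) j l| * |u i (k+1) l| ≤ (t (k+1) * B (k+1)) * 1 :=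
                      mul_le_mul (hW'B (k+1) j l) (huabs i k l) (abs_nonneg _) (he0 (k+1))
                    _ = t (k+1) * B (k+1) := mul_one _
            _ = (d (k+1) : ℝ) * (t (k+1) * B (k+1)) := by
                simp [Finset.sum_const, mul_comm]
        have h2 := hl'B (k+1)
        have h3 := he1 (k+1)
        have h4 := he0 (k+1)
        have h5 : (0 : ℝ) ≤ (d (k+1) : ℝ) := Nat.cast_nonneg _
        nlinarith [mul_nonneg h5 (by linarith : (0:ℝ) ≤ 1 - t (k+1) * B (k+1))]
      rw [hu2eq]
      exact binAct_key hb
    have hW'1 : ∀ k j l, |W' k j l| ≤ 1 := fun k j l => (hW'B k j l).trans (he1 k).le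
    have hl'1 : ∀ k, |lam' k| ≤ 1 := fun k => (hl'B k).trans (he1 k).le
    refine ⟨W', lam', u, s, ?_, ?_, ?_, ?_, ?_, ?_, ?_, ?_, ?_, ?_, ?_, ?_, ?_⟩
    · intro k _ j l
      exact Set.mem_Icc.2 (abs_le.1 (hW'1 k j l))
    · intro k _
      exact Set.mem_Icc.2 (abs_le.1 (hl'1 k))
    · intro i k hk1 _ j
      cases k with
      | zero => omega
      | succ k' => exact hu01 i k' j
    · intro i k _ l j
      rw [hseq]
      rcases hu01 i k l with h | h <;> rw [h]
      · simp
      · rw [mul_one]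
        exact Set.mem_Icc.2 (abs_le.1 (hW'1 (k+1) j l))
    · intro i j; exact (hkey1 i j).1
    · intro i j; exact (hkey1 i j).2
    · intro i k _ j; exact (hkey2 i k j).1
    · intro i k _ j; exact (hkey2 i k j).2
    · intro i k _ l j
      rw [hseq]
      rcases hu01 i k l with h | h <;> rw [h]
      · simp
      · rw [mul_one]; exact (abs_le.1 (hW'1 (k+1) j l)).2
    · intro i k _ l j
      rw [hseq]
      rcases hu01 i k l with h | h <;> rw [h]
      · simp
      · rw [mul_one]
        have := (abs_le.1 (hW'1 (k+1) j l)).1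
        linarith
    · intro i k _ l j
      rw [hseq]
      rcases hu01 i k l with h | h <;> rw [h]
      · rw [mul_zero]
        have := (abs_le.1 (hW'1 (k+1) j l)).1
        linarith
      · rw [mul_one]; linarith
    · intro i k _ l j
      rw [hseq]
      rcases hu01 i k l with h | h <;> rw [h]
      · rw [mul_zero]
        have := (abs_le.1 (hW'1 (k+1) j l)).2
        linarith
      · rw [mul_one]; linarith
    · refine Finset.sum_congr rfl fun i _ => ?_
      have : u i K = bdnnOut d W lam K (x i) := by
        rw [hudef, hW'def, hl'def]
        exact bdnnOut_scale d W lam t ht0 K (x i)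
      rw [this]
  · -- MIP value is an NN value
    rintro ⟨W, lam, u, s, _, _, hu01, _, h5, h6, h7, h8, h9, h10, h11, h12, rfl⟩
    refine ⟨W, lam, ?_⟩
    have hu : ∀ k, 1 ≤ k → k ≤ K → ∀ i, u i k = bdnnOut d W lam k (x i) := by
      intro k
      induction k using Nat.twoStepInduction with
      | zero => intro h; omega
      | one =>
        intro _ hK1 i
        funext j
        have h5' := h5 i j
        have h6' := h6 i j
        have hout : bdnnOut d W lam 1 (x i) j = binAct (lam 0) ((W 0).mulVec (x i) j) := rfl
        rw [hout]
        rcases hu01 i 1 le_rfl hK1 j with h | h <;> rw [h] at h5' h6' ⊢ <;> unfold binAct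
        · have : (W 0).mulVec (x i) j < lam 0 := by linarith
          rw [if_pos this]
        · have : ¬ (W 0).mulVec (x i) j < lam 0 := by push_neg; linarith
          rw [if_neg this]
      | more n ihn ihn1 =>
        intro _ hK2 i
        have hn1K : n + 1 ≤ K := by omega
        have ihu := ihn1 (by omega) hn1K i
        funext j
        have hseq : ∀ l, s i n l j = W (n+1) j l * u i (n+1) l := by
          intro l
          rcases hu01 i (n+1) (by omega) hn1K l with h | h
          · have a1 := h9 i n hK2 l j
            have a2 := h10 i n hK2 l j
            rw [h] at a1 a2 ⊢
            rw [mul_zero]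
            simp only [neg_zero] at a2
            linarith
          · have a1 := h11 i n hK2 l j
            have a2 := h12 i n hK2 l j
            rw [h] at a1 a2 ⊢
            rw [mul_one]
            simp only [sub_self, add_zero, sub_zero] at a1 a2
            linarith
        have hsum : (∑ l, s i n l j) = (W (n+1)).mulVec (u i (n+1)) j := by
          rw [mulVec_apply']
          exact Finset.sum_congr rfl fun l _ => hseq l
        have h7' := h7 i n hK2 j
        have h8' := h8 i n hK2 j
        rw [hsum] at h7' h8'
        have hout : bdnnOut d W lam (n+2) (x i) j
            = binAct (lam (n+1)) ((W (n+1)).mulVec (u i (n+1)) j) := by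
          show binAct (lam (n+1)) ((W (n+1)).mulVec (bdnnOut d W lam (n+1) (x i)) j) = _
          rw [ihu]
        rw [hout]
        rcases hu01 i (n+2) (by omega) hK2 j with h | h <;> rw [h] at h7' h8' ⊢ <;>
          unfold binAct
        · have : (W (n+1)).mulVec (u i (n+1)) j < lam (n+1) := by linarith
          rw [if_pos this]
        · have : ¬ (W (n+1)).mulVec (u i (n+1)) j < lam (n+1) := by push_neg; linarith
          rw [if_neg this]
    exact Finset.sum_congr rfl fun i _ => by rw [hu K hK le_rfl i]
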